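/- (Antipode identity.) Let n ≥ 1 and w ∈ S_n. The polynomial 𝔖_w(x,t) − (−1)^{ℓ(w)} 𝔖_{w^{-1}}(t,x) lies in the ideal of ℚ[x_1,…,x_n,t_1,…,t_n] generated by the differences p(x_1,…,x_n) − p(t_1,…,t_n), as p ranges over all symmetric polynomials in n variables. Here 𝔖_{w^{-1}}(t,x) denotes the double Schubert polynomial of w^{-1} with the roles of the x-variables and t-variables exchanged. -/

import Mathlib

open MvPolynomial
open scoped Classical

/-- The Coxeter length of a permutation of `Fin n`, i.e. its number of inversions. -/
def permLen {n : ℕ} (w : Equiv.Perm (Fin n)) : ℕ :=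
  (Finset.univ.filter (fun p : Fin n × Fin n => p.1 < p.2 ∧ w p.2 < w p.1)).card

/-- The adjacent transposition `s_i` exchanging the `i`-th and `(i+1)`-th letters
(zero-indexed); junk value `1` if out of range. -/
def adjSwap (n : ℕ) (i : ℕ) : Equiv.Perm (Fin n) :=
  if h : i + 1 < n then Equiv.swap ⟨i, Nat.lt_of_succ_lt h⟩ ⟨i + 1, h⟩ else 1

/-- The longest element `w₀` of the symmetric group on `Fin n`, `i ↦ n - 1 - i`
(one-indexed: `i ↦ n + 1 - i`). -/
def w0 (n : ℕ) : Equiv.Perm (Fin n) := Fin.revPerm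

/-- The Demazure (divided difference) operator with respect to a pair of variables `i j`:
`f ↦ (f - swap(i,j)·f) / (Xᵢ - Xⱼ)`.  The difference is always divisible by `Xᵢ - Xⱼ`
(for `i ≠ j`), and the quotient is unique since the polynomial ring is a domain, so the
definition by choice below produces exactly this quotient. -/
noncomputable def demazure {σ : Type} [DecidableEq σ] (i j : σ)
    (f : MvPolynomial σ ℚ) : MvPolynomial σ ℚ :=
  if h : ∃ g, f - rename (Equiv.swap i j) f = (X i - X j) * g then h.choose else 0

/-- The Demazure operator `∂ᵢ` on `ℚ[x₀, …, x_{n-1}]` (zero-indexed). -/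
noncomputable def demAt (n : ℕ) (i : ℕ) :
    MvPolynomial (Fin n) ℚ → MvPolynomial (Fin n) ℚ :=
  if h : i + 1 < n then demazure ⟨i, Nat.lt_of_succ_lt h⟩ ⟨i + 1, h⟩ else fun _ => 0

/-- The composite Demazure operator `∂_{i₁} ∘ ⋯ ∘ ∂_{i_r}` along a word `l = [i₁, …, i_r]`. -/
noncomputable def demWord (n : ℕ) (l : List ℕ) :
    MvPolynomial (Fin n) ℚ → MvPolynomial (Fin n) ℚ :=
  l.foldr (fun i op => demAt n i ∘ op) id

/-- `l = [i₁, …, i_r]` is a reduced word for `w` if all letters are in range,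
`s_{i₁} ⋯ s_{i_r} = w`, and `r = ℓ(w)` is the number of inversions of `w`. -/
def IsReducedWord (n : ℕ) (w : Equiv.Perm (Fin n)) (l : List ℕ) : Prop :=
  (∀ i ∈ l, i + 1 < n) ∧ (l.map (adjSwap n)).prod = w ∧ l.length = permLen w

/-- The Demazure operator `∂_w`, defined along a chosen reduced word of `w`
(the result is independent of this choice). -/
noncomputable def demazureOf (n : ℕ) (w : Equiv.Perm (Fin n)) :
    MvPolynomial (Fin n) ℚ → MvPolynomial (Fin n) ℚ :=
  if h : ∃ l, IsReducedWord n w l then demWord n h.choose else fun _ => 0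

/-- The Demazure operator `∂ᵢˣ` acting on the `x`-variables (the left summand) of
`ℚ[x₁, …, xₙ, t₁, …, tₙ]`. -/
noncomputable def demAtX (n : ℕ) (i : ℕ) :
    MvPolynomial (Fin n ⊕ Fin n) ℚ → MvPolynomial (Fin n ⊕ Fin n) ℚ :=
  if h : i + 1 < n then
    demazure (Sum.inl ⟨i, Nat.lt_of_succ_lt h⟩) (Sum.inl ⟨i + 1, h⟩) else fun _ => 0

/-- Composite of `x`-variable Demazure operators along a word. -/
noncomputable def demWordX (n : ℕ) (l : List ℕ) :
    MvPolynomial (Fin n ⊕ Fin n) ℚ → MvPolynomial (Fin n ⊕ Fin n) ℚ :=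
  l.foldr (fun i op => demAtX n i ∘ op) id

/-- The Demazure operator `∂_wˣ` in the `x`-variables, along a chosen reduced word of `w`. -/
noncomputable def demazureOfX (n : ℕ) (w : Equiv.Perm (Fin n)) :
    MvPolynomial (Fin n ⊕ Fin n) ℚ → MvPolynomial (Fin n ⊕ Fin n) ℚ :=
  if h : ∃ l, IsReducedWord n w l then demWordX n h.choose else fun _ => 0

/-- The top product `∏_{i + j ≤ n} (xᵢ - tⱼ)` (one-indexed), i.e. the double Schubert
polynomial of the longest element. -/
noncomputable def schubProd (n : ℕ) : MvPolynomial (Fin n ⊕ Fin n) ℚ :=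
  ∏ p ∈ Finset.univ.filter (fun p : Fin n × Fin n => (p.1 : ℕ) + (p.2 : ℕ) + 2 ≤ n),
    (X (Sum.inl p.1) - X (Sum.inr p.2))

/-- The double Schubert polynomial `𝔖_w(x, t) = ∂ˣ_{w⁻¹w₀} (∏_{i+j≤n} (xᵢ - tⱼ))`. -/
noncomputable def schubert (n : ℕ) (w : Equiv.Perm (Fin n)) :
    MvPolynomial (Fin n ⊕ Fin n) ℚ :=
  demazureOfX n (w⁻¹ * w0 n) (schubProd n)


/-!
The identity holds on the nose: `𝔖_w(x,t) = (-1)^{ℓ(w)} 𝔖_{w⁻¹}(t,x)`.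

Let `P = ∏_{i+j≤n} (xᵢ - tⱼ)`. Rows `i, i+1` of the staircase `{i + j ≤ n}`, and its columns
`n-i, n+1-i`, differ only in the box `(i, n-i)`, so `∂ˣᵢ P = -∂ᵗ_{n-i} P`. As `x`- and
`t`-operators commute, this moves a reduced word `s_{j₁} ⋯ s_{j_r}` of `w⁻¹w₀` from the `x`- to
the `t`-variables, turning it into `s_{n-j_r} ⋯ s_{n-j₁}`, a reduced word of
`w₀(w⁻¹w₀)⁻¹w₀ = ww₀`. Exchanging `x` and `t` turns the resulting expression into
`𝔖_{w⁻¹}(t,x)`, up to the sign `(-1)^{ℓ(w₀)}` of `P`; the signs combine to `(-1)^{ℓ(w)}` because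
`ℓ(w⁻¹w₀) = ℓ(w₀) - ℓ(w)`. That `∂_w` does not depend on the reduced word (Matsumoto's theorem)
follows from the braid relations of the divided differences.
-/

section Demazure

variable {σ : Type} [DecidableEq σ]

lemma X_sub_X_dvd_sub_rename_swap {R : Type*} [CommRing R] (i j : σ) (f : MvPolynomial σ R) :
    (X i - X j : MvPolynomial σ R) ∣ f - rename (Equiv.swap i j) f := by
  set I := Ideal.span {(X i - X j : MvPolynomial σ R)}
  have hswap :
      (Ideal.Quotient.mkₐ R I).comp (rename (Equiv.swap i j)) = Ideal.Quotient.mkₐ R I := by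
    refine MvPolynomial.algHom_ext fun k => ?_
    have hij : Ideal.Quotient.mk I (X i) = Ideal.Quotient.mk I (X j) :=
      Ideal.Quotient.eq.mpr (Ideal.subset_span rfl)
    simp only [AlgHom.comp_apply, rename_X, Ideal.Quotient.mkₐ_eq_mk, Equiv.swap_apply_def]
    split_ifs with hki hkj
    · rw [hki, hij]
    · rw [hkj, hij]
    · rfl
  rw [← Ideal.mem_span_singleton, ← Ideal.Quotient.eq]
  exact (congrArg (· f) hswap).symm

omit [DecidableEq σ] in
lemma X_sub_X_ne_zero {R : Type*} [CommRing R] [Nontrivial R] {i j : σ} (hij : i ≠ j) :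
    (X i - X j : MvPolynomial σ R) ≠ 0 :=
  sub_ne_zero.mpr (X_injective.ne hij)

lemma sub_rename_swap_eq_mul_demazure (i j : σ) (f : MvPolynomial σ ℚ) :
    f - rename (Equiv.swap i j) f = (X i - X j) * demazure i j f := by
  have h : ∃ g, f - rename (Equiv.swap i j) f = (X i - X j) * g :=
    X_sub_X_dvd_sub_rename_swap i j f
  rw [demazure, dif_pos h]
  exact h.choose_spec

variable {i j : σ}

lemma demazure_eq_of_sub_rename_swap_eq (hij : i ≠ j) {f g : MvPolynomial σ ℚ}
    (h : f - rename (Equiv.swap i j) f = (X i - X j) * g) : demazure i j f = g :=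
  mul_left_cancel₀ (X_sub_X_ne_zero hij) ((sub_rename_swap_eq_mul_demazure i j f).symm.trans h)

lemma demazure_sub (hij : i ≠ j) (f g : MvPolynomial σ ℚ) :
    demazure i j (f - g) = demazure i j f - demazure i j g := by
  refine demazure_eq_of_sub_rename_swap_eq hij ?_
  rw [map_sub]
  linear_combination sub_rename_swap_eq_mul_demazure i j f - sub_rename_swap_eq_mul_demazure i j g

lemma demazure_mul_of_rename_swap_eq (hij : i ≠ j) {f : MvPolynomial σ ℚ}
    (hf : rename (Equiv.swap i j) f = f) (g : MvPolynomial σ ℚ) :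
    demazure i j (f * g) = f * demazure i j g := by
  refine demazure_eq_of_sub_rename_swap_eq hij ?_
  rw [map_mul, hf]
  linear_combination f * sub_rename_swap_eq_mul_demazure i j g

lemma demazure_smul (hij : i ≠ j) (q : ℚ) (f : MvPolynomial σ ℚ) :
    demazure i j (q • f) = q • demazure i j f := by
  simp only [smul_eq_C_mul]
  exact demazure_mul_of_rename_swap_eq hij (rename_C _ _) f

lemma demazure_X_left (hij : i ≠ j) : demazure i j (X i) = 1 := by
  refine demazure_eq_of_sub_rename_swap_eq hij ?_
  rw [rename_X, Equiv.swap_apply_left, mul_one]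

lemma demazure_X_of_ne (hij : i ≠ j) {k : σ} (hki : k ≠ i) (hkj : k ≠ j) :
    demazure i j (X k) = 0 := by
  refine demazure_eq_of_sub_rename_swap_eq hij ?_
  rw [rename_X, Equiv.swap_apply_of_ne_of_ne hki hkj, sub_self, mul_zero]

lemma rename_demazure (e : Equiv.Perm σ) (hij : i ≠ j) (f : MvPolynomial σ ℚ) :
    rename e (demazure i j f) = demazure (e i) (e j) (rename e f) := by
  refine (demazure_eq_of_sub_rename_swap_eq (e.injective.ne hij) ?_).symm
  have hconj : rename (Equiv.swap (e i) (e j)) (rename e f)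
      = rename e (rename (Equiv.swap i j) f) := by
    rw [Equiv.swap_apply_apply, rename_rename, rename_rename]
    congr 1
    ext x
    simp
  rw [hconj, ← map_sub, sub_rename_swap_eq_mul_demazure i j f, map_mul, map_sub, rename_X,
    rename_X]

lemma rename_swap_demazure (hij : i ≠ j) (f : MvPolynomial σ ℚ) :
    rename (Equiv.swap i j) (demazure i j f) = demazure i j f := by
  have h := congrArg (rename (Equiv.swap i j)) (sub_rename_swap_eq_mul_demazure i j f)
  rw [map_sub, map_mul, map_sub, rename_rename, rename_X, rename_X, Equiv.swap_apply_left,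
    Equiv.swap_apply_right, Function.Involutive.comp_self (Equiv.swap_apply_self i j),
    rename_id_apply] at h
  refine mul_left_cancel₀ (X_sub_X_ne_zero hij) ?_
  linear_combination h + sub_rename_swap_eq_mul_demazure i j f

lemma demazure_comm (hij : i ≠ j) (f : MvPolynomial σ ℚ) :
    demazure j i f = -demazure i j f := by
  refine demazure_eq_of_sub_rename_swap_eq hij.symm ?_
  rw [Equiv.swap_comm j i]
  linear_combination sub_rename_swap_eq_mul_demazure i j f

end Demazure

section DemazureRelations

variable {σ : Type} [DecidableEq σ]

lemma demazure_neg {i j : σ} (hij : i ≠ j) (f : MvPolynomial σ ℚ) :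
    demazure i j (-f) = -demazure i j f := by
  simpa only [neg_one_smul] using demazure_smul hij (-1) f

lemma demazure_demazure_comm {i j k l : σ} (hij : i ≠ j) (hkl : k ≠ l)
    (hik : i ≠ k) (hil : i ≠ l) (hjk : j ≠ k) (hjl : j ≠ l) (f : MvPolynomial σ ℚ) :
    demazure i j (demazure k l f) = demazure k l (demazure i j f) := by
  refine demazure_eq_of_sub_rename_swap_eq hij ?_
  have hswap : rename (Equiv.swap i j) (demazure k l f)
      = demazure k l (rename (Equiv.swap i j) f) := by
    rw [rename_demazure _ hkl, Equiv.swap_apply_of_ne_of_ne hik.symm hjk.symm,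
      Equiv.swap_apply_of_ne_of_ne hil.symm hjl.symm]
  have hinv : rename (Equiv.swap k l) (X i - X j : MvPolynomial σ ℚ) = X i - X j := by
    rw [map_sub, rename_X, rename_X, Equiv.swap_apply_of_ne_of_ne hik hil,
      Equiv.swap_apply_of_ne_of_ne hjk hjl]
  rw [hswap, ← demazure_sub hkl, sub_rename_swap_eq_mul_demazure i j f,
    demazure_mul_of_rename_swap_eq hkl hinv]

lemma Equiv.swap_mul_swap_eq_swap_mul_swap {α : Type*} [DecidableEq α] {a b c : α}
    (hab : a ≠ b) (hbc : b ≠ c) (hac : a ≠ c) :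
    Equiv.swap a c * Equiv.swap b c = Equiv.swap a b * Equiv.swap a c := by
  ext x
  simp only [Equiv.Perm.mul_apply, Equiv.swap_apply_def]
  split_ifs <;> simp_all

lemma Equiv.swap_mul_swap_eq_swap_mul_swap' {α : Type*} [DecidableEq α] {a b c : α}
    (hab : a ≠ b) (hbc : b ≠ c) (hac : a ≠ c) :
    Equiv.swap b c * Equiv.swap a c = Equiv.swap a c * Equiv.swap a b := by
  simpa only [mul_inv_rev, Equiv.swap_inv] using
    congrArg (·⁻¹) (Equiv.swap_mul_swap_eq_swap_mul_swap hab hbc hac)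

lemma mul_demazure_demazure_demazure {p q r : σ} (hpq : p ≠ q) (hqr : q ≠ r) (hpr : p ≠ r)
    (f : MvPolynomial σ ℚ) :
    (X p - X q) * (X q - X r) * (X p - X r) * demazure p q (demazure q r (demazure p q f))
      = f - rename (Equiv.swap p q) f - rename (Equiv.swap q r) f - rename (Equiv.swap p r) f
          + rename (Equiv.swap p r) (rename (Equiv.swap q r) f)
          + rename (Equiv.swap q r) (rename (Equiv.swap p r) f) := by
  have e1 := sub_rename_swap_eq_mul_demazure p q (demazure q r (demazure p q f))
  have e2 : rename (Equiv.swap p q) (demazure q r (demazure p q f))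
      = demazure p r (demazure p q f) := by
    rw [rename_demazure _ hqr, Equiv.swap_apply_right,
      Equiv.swap_apply_of_ne_of_ne hpr.symm hqr.symm, rename_swap_demazure hpq]
  have e3 := sub_rename_swap_eq_mul_demazure q r (demazure p q f)
  have e4 := sub_rename_swap_eq_mul_demazure p r (demazure p q f)
  have e5 : rename (Equiv.swap q r) (demazure p q f)
      = demazure p r (rename (Equiv.swap q r) f) := by
    rw [rename_demazure _ hpq, Equiv.swap_apply_of_ne_of_ne hpq hpr, Equiv.swap_apply_left]
  have e6 : rename (Equiv.swap p r) (demazure p q f)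
      = -demazure q r (rename (Equiv.swap p r) f) := by
    rw [rename_demazure _ hpq, Equiv.swap_apply_left,
      Equiv.swap_apply_of_ne_of_ne hpq.symm hqr, demazure_comm hqr]
  have e7 := sub_rename_swap_eq_mul_demazure p r (rename (Equiv.swap q r) f)
  have e8 := sub_rename_swap_eq_mul_demazure q r (rename (Equiv.swap p r) f)
  have e9 := sub_rename_swap_eq_mul_demazure p q f
  linear_combination (-((X q - X r) * (X p - X r))) * e1 + (-((X q - X r) * (X p - X r))) * e2
    + (-(X p - X r)) * e3 + (X q - X r) * e4 + (-(X p - X r)) * e5 + (X q - X r) * e6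
    + e7 + e8 - e9

/-- Both sides are the alternating sum of `mul_demazure_demazure_demazure` divided by the
Vandermonde product. -/
lemma demazure_braid {p q r : σ} (hpq : p ≠ q) (hqr : q ≠ r) (hpr : p ≠ r)
    (f : MvPolynomial σ ℚ) :
    demazure p q (demazure q r (demazure p q f))
      = demazure q r (demazure p q (demazure q r f)) := by
  have h₁ := mul_demazure_demazure_demazure hpq hqr hpr f
  have h₂ := mul_demazure_demazure_demazure hqr.symm hpq.symm hpr.symm f
  simp only [demazure_comm hqr, demazure_comm hpq, demazure_neg hqr, demazure_neg hpq,
    Equiv.swap_comm r q, Equiv.swap_comm q p, Equiv.swap_comm r p] at h₂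
  have c₁ : rename (Equiv.swap p r) (rename (Equiv.swap q r) f)
      = rename (Equiv.swap p q) (rename (Equiv.swap p r) f) := by
    rw [rename_rename, rename_rename, ← Equiv.Perm.coe_mul, ← Equiv.Perm.coe_mul,
      Equiv.swap_mul_swap_eq_swap_mul_swap hpq hqr hpr]
  have c₂ : rename (Equiv.swap q r) (rename (Equiv.swap p r) f)
      = rename (Equiv.swap p r) (rename (Equiv.swap p q) f) := by
    rw [rename_rename, rename_rename, ← Equiv.Perm.coe_mul, ← Equiv.Perm.coe_mul,
      Equiv.swap_mul_swap_eq_swap_mul_swap' hpq hqr hpr]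
  refine mul_left_cancel₀ (mul_ne_zero (mul_ne_zero (X_sub_X_ne_zero hpq)
    (X_sub_X_ne_zero hqr)) (X_sub_X_ne_zero hpr)) ?_
  linear_combination h₁ - h₂ + c₁ + c₂

end DemazureRelations

section AdjSwap

variable {n : ℕ}

lemma adjSwap_of_lt {i : ℕ} (h : i + 1 < n) :
    adjSwap n i = Equiv.swap ⟨i, Nat.lt_of_succ_lt h⟩ ⟨i + 1, h⟩ :=
  dif_pos h

lemma adjSwap_of_le {i : ℕ} (h : n ≤ i + 1) : adjSwap n i = 1 :=
  dif_neg (by omega)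

lemma adjSwap_mul_self (i : ℕ) : adjSwap n i * adjSwap n i = 1 := by
  unfold adjSwap
  split_ifs
  exacts [Equiv.swap_mul_self _ _, one_mul 1]

lemma adjSwap_involutive (i : ℕ) : Function.Involutive (adjSwap n i) := fun x => by
  rw [← Equiv.Perm.mul_apply, adjSwap_mul_self, Equiv.Perm.one_apply]

lemma adjSwap_mul_adjSwap_mul (i : ℕ) (w : Equiv.Perm (Fin n)) :
    adjSwap n i * (adjSwap n i * w) = w := by
  rw [← mul_assoc, adjSwap_mul_self, one_mul]

lemma adjSwap_inv (i : ℕ) : (adjSwap n i)⁻¹ = adjSwap n i :=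
  inv_eq_of_mul_eq_one_right (adjSwap_mul_self i)

lemma adjSwap_mul_inv_apply (i : ℕ) (w : Equiv.Perm (Fin n)) (x : Fin n) :
    (adjSwap n i * w)⁻¹ x = w⁻¹ (adjSwap n i x) := by
  rw [mul_inv_rev, adjSwap_inv, Equiv.Perm.mul_apply]

lemma adjSwap_apply_left {i : ℕ} (h : i + 1 < n) :
    adjSwap n i ⟨i, Nat.lt_of_succ_lt h⟩ = ⟨i + 1, h⟩ := by
  rw [adjSwap_of_lt h, Equiv.swap_apply_left]

lemma adjSwap_apply_right {i : ℕ} (h : i + 1 < n) :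
    adjSwap n i ⟨i + 1, h⟩ = ⟨i, Nat.lt_of_succ_lt h⟩ := by
  rw [adjSwap_of_lt h, Equiv.swap_apply_right]

lemma adjSwap_apply_of_ne {i k : ℕ} (hk : k < n) (h₁ : k ≠ i) (h₂ : k ≠ i + 1) :
    adjSwap n i ⟨k, hk⟩ = ⟨k, hk⟩ := by
  unfold adjSwap
  split_ifs
  · exact Equiv.swap_apply_of_ne_of_ne (by simpa [Fin.ext_iff]) (by simpa [Fin.ext_iff])
  · rfl

lemma val_adjSwap {i : ℕ} (h : i + 1 < n) (x : Fin n) :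
    (adjSwap n i x : ℕ) = if (x : ℕ) = i then i + 1 else if (x : ℕ) = i + 1 then i else x := by
  rw [adjSwap_of_lt h, Equiv.swap_apply_def]
  split_ifs <;> simp_all [Fin.ext_iff]

lemma adjSwap_lt_adjSwap_iff {i : ℕ} (h : i + 1 < n) {x y : Fin n}
    (hxy : ¬((x : ℕ) = i ∧ (y : ℕ) = i + 1)) (hyx : ¬((x : ℕ) = i + 1 ∧ (y : ℕ) = i)) :
    adjSwap n i x < adjSwap n i y ↔ x < y := by
  simp only [adjSwap_of_lt h, Equiv.swap_apply_def, Fin.lt_def, Fin.ext_iff]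
  split_ifs <;> simp only <;> omega

lemma adjSwap_comm {i j : ℕ} (hij : i + 2 ≤ j) :
    adjSwap n i * adjSwap n j = adjSwap n j * adjSwap n i := by
  by_cases hj : j + 1 < n
  · rw [adjSwap_of_lt hj, adjSwap_of_lt (by omega : i + 1 < n)]
    exact (Equiv.Perm.disjoint_swap_swap (by simp [Fin.ext_iff]; omega)).commute
  · rw [adjSwap_of_le (by omega : n ≤ j + 1), one_mul, mul_one]

lemma adjSwap_braid {i : ℕ} (h : i + 2 < n) :
    adjSwap n i * adjSwap n (i + 1) * adjSwap n i
      = adjSwap n (i + 1) * adjSwap n i * adjSwap n (i + 1) := by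
  set a : Fin n := ⟨i, by omega⟩
  set b : Fin n := ⟨i + 1, by omega⟩
  set c : Fin n := ⟨i + 2, h⟩
  have hab : a ≠ b := by simp [a, b, Fin.ext_iff]
  have hbc : b ≠ c := by simp [b, c, Fin.ext_iff]
  have hac : a ≠ c := by simp [a, c, Fin.ext_iff]
  rw [adjSwap_of_lt h, adjSwap_of_lt (by omega : i + 1 < n)]
  calc Equiv.swap a b * Equiv.swap b c * Equiv.swap a b
      = Equiv.swap b a * Equiv.swap c b * Equiv.swap b a := by
        rw [Equiv.swap_comm a b, Equiv.swap_comm b c]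
    _ = Equiv.swap c a := by
        rw [Equiv.swap_mul_swap_mul_swap hbc.symm hac.symm, Equiv.swap_comm]
    _ = Equiv.swap b c * Equiv.swap a b * Equiv.swap b c :=
        (Equiv.swap_mul_swap_mul_swap hab hac).symm

end AdjSwap

section PermLen

variable {n : ℕ}

lemma permLen_one : permLen (1 : Equiv.Perm (Fin n)) = 0 := by
  simp only [permLen, Equiv.Perm.one_apply]
  exact Finset.card_eq_zero.mpr (Finset.filter_eq_empty_iff.mpr fun p _ h => lt_asymm h.1 h.2)

lemma permLen_inv (w : Equiv.Perm (Fin n)) : permLen w⁻¹ = permLen w := by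
  refine Finset.card_bij' (fun p _ => (w⁻¹ p.2, w⁻¹ p.1)) (fun p _ => (w p.2, w p.1))
    ?_ ?_ ?_ ?_ <;> simp +contextual [Equiv.Perm.inv_def]

lemma permLen_adjSwap_mul_of_lt {i : ℕ} (h : i + 1 < n) {w : Equiv.Perm (Fin n)}
    (hd : w⁻¹ ⟨i, Nat.lt_of_succ_lt h⟩ < w⁻¹ ⟨i + 1, h⟩) :
    permLen (adjSwap n i * w) = permLen w + 1 := by
  set a : Fin n := ⟨i, Nat.lt_of_succ_lt h⟩
  set b : Fin n := ⟨i + 1, h⟩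
  -- the only inversion created by `sᵢ` is the pair of positions of the values `i, i + 1`
  have hinv : Finset.univ.filter (fun p : Fin n × Fin n =>
        p.1 < p.2 ∧ (adjSwap n i * w) p.2 < (adjSwap n i * w) p.1)
      = insert (w⁻¹ a, w⁻¹ b)
          (Finset.univ.filter (fun p : Fin n × Fin n => p.1 < p.2 ∧ w p.2 < w p.1)) := by
    have hd' : w.symm a < w.symm b := hd
    ext ⟨p₁, p₂⟩
    obtain ⟨x, rfl⟩ := w⁻¹.surjective p₁
    obtain ⟨y, rfl⟩ := w⁻¹.surjective p₂
    simp only [Finset.mem_filter, Finset.mem_univ, true_and, Finset.mem_insert, Prod.mk.injEq]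
    simp only [Equiv.Perm.mul_apply, Equiv.Perm.inv_def, Equiv.apply_symm_apply,
      w.symm.injective.eq_iff]
    by_cases hab : x = a ∧ y = b
    · obtain ⟨rfl, rfl⟩ := hab
      simp [hd', adjSwap_apply_left h, adjSwap_apply_right h, a, b, Fin.mk_lt_mk]
    by_cases hba : x = b ∧ y = a
    · obtain ⟨rfl, rfl⟩ := hba
      simp [lt_asymm hd', hab]
    rw [adjSwap_lt_adjSwap_iff h (by simpa [a, b, Fin.ext_iff, and_comm] using hba)
      (by simpa [a, b, Fin.ext_iff, and_comm] using hab)]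
    tauto
  rw [permLen, hinv, Finset.card_insert_of_notMem (by simp [a, b, Fin.mk_lt_mk]), permLen]

lemma permLen_adjSwap_mul_of_gt {i : ℕ} (h : i + 1 < n) {w : Equiv.Perm (Fin n)}
    (hd : w⁻¹ ⟨i + 1, h⟩ < w⁻¹ ⟨i, Nat.lt_of_succ_lt h⟩) :
    permLen (adjSwap n i * w) + 1 = permLen w := by
  have := permLen_adjSwap_mul_of_lt h (w := adjSwap n i * w) (by
    rwa [adjSwap_mul_inv_apply, adjSwap_mul_inv_apply, adjSwap_apply_left, adjSwap_apply_right])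
  rwa [adjSwap_mul_adjSwap_mul, eq_comm] at this

lemma permLen_adjSwap_mul_add_one_eq_iff {i : ℕ} (h : i + 1 < n) (w : Equiv.Perm (Fin n)) :
    permLen (adjSwap n i * w) + 1 = permLen w
      ↔ w⁻¹ ⟨i + 1, h⟩ < w⁻¹ ⟨i, Nat.lt_of_succ_lt h⟩ := by
  refine ⟨fun hlen => ?_, permLen_adjSwap_mul_of_gt h⟩
  refine lt_of_le_of_ne (not_lt.mp fun hd => ?_) (w⁻¹.injective.ne (by simp [Fin.ext_iff]))
  have := permLen_adjSwap_mul_of_lt h hd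
  omega

lemma permLen_adjSwap_mul_le (i : ℕ) (w : Equiv.Perm (Fin n)) :
    permLen (adjSwap n i * w) ≤ permLen w + 1 := by
  by_cases h : i + 1 < n
  · rcases lt_or_gt_of_ne (w⁻¹.injective.ne (by simp [Fin.ext_iff] :
        (⟨i, Nat.lt_of_succ_lt h⟩ : Fin n) ≠ ⟨i + 1, h⟩)) with hd | hd
    · exact (permLen_adjSwap_mul_of_lt h hd).le
    · have := permLen_adjSwap_mul_of_gt h hd
      omega
  · rw [adjSwap_of_le (by omega), one_mul]
    omega

lemma permLen_le_permLen_adjSwap_mul_add_one (i : ℕ) (w : Equiv.Perm (Fin n)) :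
    permLen w ≤ permLen (adjSwap n i * w) + 1 := by
  simpa only [adjSwap_mul_adjSwap_mul] using permLen_adjSwap_mul_le i (adjSwap n i * w)

lemma lt_of_permLen_adjSwap_mul_add_one_eq {i : ℕ} {w : Equiv.Perm (Fin n)}
    (hlen : permLen (adjSwap n i * w) + 1 = permLen w) : i + 1 < n := by
  by_contra h
  rw [adjSwap_of_le (by omega), one_mul] at hlen
  omega

lemma eq_one_of_forall_inv_lt {w : Equiv.Perm (Fin n)}
    (hw : ∀ i (h : i + 1 < n), w⁻¹ ⟨i, Nat.lt_of_succ_lt h⟩ < w⁻¹ ⟨i + 1, h⟩) : w = 1 := by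
  obtain _ | m := n
  · exact Subsingleton.elim _ _
  have hmono : StrictMono ⇑w⁻¹ := Fin.strictMono_iff_lt_succ.mpr fun i => hw i (by omega)
  exact inv_eq_one.mp (Equiv.ext (congrFun hmono.eq_id))

end PermLen

section ReducedWord

variable {n : ℕ}

lemma permLen_prod_le_length (l : List ℕ) : permLen (l.map (adjSwap n)).prod ≤ l.length := by
  induction l with
  | nil => simp [permLen_one]
  | cons i l ih =>
    have := permLen_adjSwap_mul_le i (l.map (adjSwap n)).prod
    simp only [List.map_cons, List.prod_cons, List.length_cons]
    omega

lemma IsReducedWord.cons {w : Equiv.Perm (Fin n)} {i : ℕ} {l : List ℕ}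
    (hl : IsReducedWord n (adjSwap n i * w) l) (hlen : permLen (adjSwap n i * w) + 1 = permLen w) :
    IsReducedWord n w (i :: l) := by
  obtain ⟨hrange, hprod, hlength⟩ := hl
  refine ⟨?_, ?_, ?_⟩
  · simpa only [List.mem_cons, forall_eq_or_imp] using
      ⟨lt_of_permLen_adjSwap_mul_add_one_eq hlen, hrange⟩
  · rw [List.map_cons, List.prod_cons, hprod, adjSwap_mul_adjSwap_mul]
  · rw [List.length_cons, hlength, hlen]

lemma IsReducedWord.of_cons {w : Equiv.Perm (Fin n)} {i : ℕ} {l : List ℕ}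
    (hl : IsReducedWord n w (i :: l)) : IsReducedWord n (adjSwap n i * w) l := by
  obtain ⟨hrange, hprod, hlength⟩ := hl
  have hprod' : (l.map (adjSwap n)).prod = adjSwap n i * w := by
    rw [← hprod, List.map_cons, List.prod_cons, adjSwap_mul_adjSwap_mul]
  have hle := permLen_prod_le_length (n := n) l
  have hge := permLen_le_permLen_adjSwap_mul_add_one i w
  rw [hprod'] at hle
  rw [List.length_cons] at hlength
  exact ⟨fun j hj => hrange j (List.mem_cons_of_mem i hj), hprod', by omega⟩

lemma IsReducedWord.permLen_adjSwap_mul {w : Equiv.Perm (Fin n)} {i : ℕ} {l : List ℕ}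
    (hl : IsReducedWord n w (i :: l)) : permLen (adjSwap n i * w) + 1 = permLen w := by
  rw [← hl.of_cons.2.2, ← hl.2.2, List.length_cons]

lemma exists_isReducedWord (w : Equiv.Perm (Fin n)) : ∃ l, IsReducedWord n w l := by
  induction hk : permLen w using Nat.strong_induction_on generalizing w with
  | _ k ih =>
    by_cases hw : w = 1
    · exact ⟨[], by simp, by simp [hw], by simp [hw, permLen_one]⟩
    obtain ⟨i, h, hd⟩ : ∃ i, ∃ h : i + 1 < n,
        w⁻¹ ⟨i + 1, h⟩ < w⁻¹ ⟨i, Nat.lt_of_succ_lt h⟩ := by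
      by_contra! hasc
      exact hw (eq_one_of_forall_inv_lt fun i h =>
        lt_of_le_of_ne (hasc i h) (w⁻¹.injective.ne (by simp [Fin.ext_iff])))
    have hlen := permLen_adjSwap_mul_of_gt h hd
    obtain ⟨l, hl⟩ := ih _ (by omega) (adjSwap n i * w) rfl
    exact ⟨i :: l, hl.cons hlen⟩

end ReducedWord

section Matsumoto

variable {n : ℕ}

lemma exists_isReducedWord_comm {v : Equiv.Perm (Fin n)} {i j : ℕ} (hij : i + 2 ≤ j)
    (hi : permLen (adjSwap n i * v) + 1 = permLen v)
    (hj : permLen (adjSwap n j * v) + 1 = permLen v) :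
    ∃ c, IsReducedWord n v (i :: j :: c) ∧ IsReducedWord n v (j :: i :: c) := by
  have hj' := lt_of_permLen_adjSwap_mul_add_one_eq hj
  have hji : permLen (adjSwap n j * (adjSwap n i * v)) + 1 = permLen (adjSwap n i * v) := by
    rw [permLen_adjSwap_mul_add_one_eq_iff hj'] at hj ⊢
    rwa [adjSwap_mul_inv_apply, adjSwap_mul_inv_apply, adjSwap_apply_of_ne _ (by omega)
      (by omega), adjSwap_apply_of_ne _ (by omega) (by omega)]
  have hcomm : adjSwap n j * (adjSwap n i * v) = adjSwap n i * (adjSwap n j * v) := by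
    rw [← mul_assoc, ← mul_assoc, adjSwap_comm hij]
  obtain ⟨c, hc⟩ := exists_isReducedWord (adjSwap n j * (adjSwap n i * v))
  refine ⟨c, (hc.cons hji).cons hi, ((hcomm ▸ hc).cons ?_).cons hj⟩
  rw [← hcomm]
  omega

lemma exists_isReducedWord_braid {v : Equiv.Perm (Fin n)} {i : ℕ}
    (hi : permLen (adjSwap n i * v) + 1 = permLen v)
    (hi' : permLen (adjSwap n (i + 1) * v) + 1 = permLen v) :
    ∃ c, IsReducedWord n v (i :: (i + 1) :: i :: c)
      ∧ IsReducedWord n v ((i + 1) :: i :: (i + 1) :: c) := by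
  have h : i + 2 < n := lt_of_permLen_adjSwap_mul_add_one_eq hi'
  have hvi := (permLen_adjSwap_mul_add_one_eq_iff (by omega) v).mp hi
  have hvi' := (permLen_adjSwap_mul_add_one_eq_iff h v).mp hi'
  have hd₂ : permLen (adjSwap n (i + 1) * (adjSwap n i * v)) + 1 = permLen (adjSwap n i * v) := by
    rw [permLen_adjSwap_mul_add_one_eq_iff h, adjSwap_mul_inv_apply, adjSwap_mul_inv_apply,
      adjSwap_apply_of_ne _ (by omega) (by omega), adjSwap_apply_right]
    exact hvi'.trans hvi
  have hd₃ : permLen (adjSwap n i * (adjSwap n (i + 1) * (adjSwap n i * v))) + 1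
      = permLen (adjSwap n (i + 1) * (adjSwap n i * v)) := by
    rw [permLen_adjSwap_mul_add_one_eq_iff (by omega)]
    simp only [adjSwap_mul_inv_apply]
    rwa [adjSwap_apply_left h, adjSwap_apply_of_ne h (by omega) (by omega),
      adjSwap_apply_of_ne (k := i) _ (by omega) (by omega), adjSwap_apply_left]
  obtain ⟨c, hc⟩ :=
    exists_isReducedWord (adjSwap n i * (adjSwap n (i + 1) * (adjSwap n i * v)))
  refine ⟨c, ((hc.cons hd₃).cons hd₂).cons hi, ?_, ?_, ?_⟩
  · simpa only [List.mem_cons, forall_eq_or_imp] using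
      ⟨by omega, by omega, by omega, hc.1⟩
  · have hbraid : ∀ x : Equiv.Perm (Fin n),
        adjSwap n (i + 1) * (adjSwap n i * (adjSwap n (i + 1) * x))
          = adjSwap n i * (adjSwap n (i + 1) * (adjSwap n i * x)) := by
      intro x
      simp only [← mul_assoc, adjSwap_braid h]
    simp only [List.map_cons, List.prod_cons, hc.2.1, hbraid, adjSwap_mul_adjSwap_mul]
  · simp only [List.length_cons, hc.2.2]
    omega

/-- Matsumoto's theorem. -/
theorem IsReducedWord.prod_map_eq {M : Type*} [Monoid M] (g : ℕ → M)
    (hcomm : ∀ i j, i + 2 ≤ j → j + 1 < n → g i * g j = g j * g i)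
    (hbraid : ∀ i, i + 2 < n → g i * g (i + 1) * g i = g (i + 1) * g i * g (i + 1))
    {w : Equiv.Perm (Fin n)} {l l' : List ℕ} (hl : IsReducedWord n w l)
    (hl' : IsReducedWord n w l') : (l.map g).prod = (l'.map g).prod := by
  induction hk : permLen w using Nat.strong_induction_on generalizing w l l' with
  | _ k ih =>
  have hhead : ∀ {i a b}, IsReducedWord n w (i :: a) → IsReducedWord n w (i :: b) →
      ((i :: a).map g).prod = ((i :: b).map g).prod := by
    intro i a b ha hb
    have := ha.permLen_adjSwap_mul
    simp only [List.map_cons, List.prod_cons]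
    rw [ih _ (by omega) ha.of_cons hb.of_cons rfl]
  have key : ∀ i j a b, i ≤ j → IsReducedWord n w (i :: a) → IsReducedWord n w (j :: b) →
      ((i :: a).map g).prod = ((j :: b).map g).prod := by
    intro i j a b hij ha hb
    obtain rfl | rfl | hij := (by omega : j = i ∨ j = i + 1 ∨ i + 2 ≤ j)
    · exact hhead ha hb
    · obtain ⟨c, hc, hc'⟩ :=
        exists_isReducedWord_braid ha.permLen_adjSwap_mul hb.permLen_adjSwap_mul
      have hgbraid := hbraid i (lt_of_permLen_adjSwap_mul_add_one_eq hb.permLen_adjSwap_mul)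
      calc ((i :: a).map g).prod = ((i :: (i + 1) :: i :: c).map g).prod := hhead ha hc
        _ = (((i + 1) :: i :: (i + 1) :: c).map g).prod := by
          simp only [List.map_cons, List.prod_cons, ← mul_assoc, hgbraid]
        _ = (((i + 1) :: b).map g).prod := hhead hc' hb
    · obtain ⟨c, hc, hc'⟩ :=
        exists_isReducedWord_comm hij ha.permLen_adjSwap_mul hb.permLen_adjSwap_mul
      calc ((i :: a).map g).prod = ((i :: j :: c).map g).prod := hhead ha hc
        _ = ((j :: i :: c).map g).prod := by
          simp only [List.map_cons, List.prod_cons, ← mul_assoc,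
            hcomm i j hij (lt_of_permLen_adjSwap_mul_add_one_eq hb.permLen_adjSwap_mul)]
        _ = ((j :: b).map g).prod := hhead hc' hb
  match l, l', hl, hl' with
  | [], [], _, _ => rfl
  | [], _ :: _, hl, hl' => simp [← hl.2.2, IsReducedWord] at hl'
  | _ :: _, [], hl, hl' => simp [← hl'.2.2, IsReducedWord] at hl
  | i :: a, j :: b, hl, hl' =>
    rcases le_total i j with hij | hij
    exacts [key i j a b hij hl hl', (key j i b a hij hl' hl).symm]

end Matsumoto

section LongestElement

variable {n : ℕ}

lemma w0_mul_self : w0 n * w0 n = 1 := by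
  ext x
  simp [w0]

lemma w0_inv : (w0 n)⁻¹ = w0 n :=
  inv_eq_of_mul_eq_one_right w0_mul_self

lemma w0_mul_adjSwap_mul_w0 {j : ℕ} (hj : j + 1 < n) :
    w0 n * adjSwap n j * w0 n = adjSwap n (n - 2 - j) := by
  ext x
  simp only [Equiv.Perm.mul_apply, adjSwap_of_lt hj, adjSwap_of_lt (by omega : n - 2 - j + 1 < n),
    w0, Fin.revPerm_apply, Equiv.swap_apply_def, Fin.ext_iff, Fin.val_rev]
  split_ifs <;> simp only [Fin.val_rev] <;> omega

lemma permLen_w0 : permLen (w0 n)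
    = (Finset.univ.filter (fun p : Fin n × Fin n => (p.1 : ℕ) + (p.2 : ℕ) + 2 ≤ n)).card := by
  refine Finset.card_bij' (fun p _ => (p.1, p.2.rev)) (fun p _ => (p.1, p.2.rev)) ?_ ?_ ?_ ?_
  all_goals simp only [Finset.mem_filter, Finset.mem_univ, true_and, w0, Fin.revPerm_apply,
    Fin.lt_def, Fin.val_rev, Fin.rev_rev, implies_true]
  all_goals intro p; have := p.1.isLt; have := p.2.isLt; omega

lemma permLen_mul_w0_add_permLen (v : Equiv.Perm (Fin n)) :
    permLen (v * w0 n) + permLen v = permLen (w0 n) := by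
  have hrev : permLen (v * w0 n) = ((Finset.univ.filter fun p : Fin n × Fin n => p.1 < p.2).filter
      fun p => ¬ v p.2 < v p.1).card := by
    rw [permLen, Finset.filter_filter]
    refine Finset.card_bij' (fun p _ => (p.2.rev, p.1.rev)) (fun p _ => (p.2.rev, p.1.rev))
      ?_ ?_ ?_ ?_
    all_goals simp +contextual only [Finset.mem_filter, Finset.mem_univ, true_and,
      Equiv.Perm.mul_apply, w0, Fin.revPerm_apply, Fin.rev_lt_rev, Fin.rev_rev, not_lt,
      implies_true]
    · exact fun p hp => hp.2.le
    · exact fun p hp => lt_of_le_of_ne hp.2 (v.injective.ne hp.1.ne)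
  have hw0 : permLen (w0 n) = (Finset.univ.filter fun p : Fin n × Fin n => p.1 < p.2).card := by
    simp only [permLen, w0, Fin.revPerm_apply, Fin.rev_lt_rev, and_self]
  rw [hrev, hw0, permLen, ← Finset.filter_filter, add_comm]
  exact Finset.card_filter_add_card_filter_not _

end LongestElement

section ReflectWord

variable {n : ℕ}

def reflectWord (n : ℕ) (l : List ℕ) : List ℕ :=
  (l.map (fun j => n - 2 - j)).reverse

lemma reflectWord_cons (i : ℕ) (l : List ℕ) :
    reflectWord n (i :: l) = reflectWord n l ++ [n - 2 - i] := by
  simp [reflectWord]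

lemma prod_map_adjSwap_reflectWord {l : List ℕ} (hl : ∀ j ∈ l, j + 1 < n) :
    ((reflectWord n l).map (adjSwap n)).prod = w0 n * ((l.map (adjSwap n)).prod)⁻¹ * w0 n := by
  induction l with
  | nil => simp [reflectWord, w0_mul_self]
  | cons j l ih =>
    have hj : j + 1 < n := hl j List.mem_cons_self
    rw [reflectWord_cons, List.map_append, List.prod_append,
      ih fun k hk => hl k (List.mem_cons_of_mem j hk), List.map_singleton, List.prod_singleton,
      ← w0_mul_adjSwap_mul_w0 hj, List.map_cons, List.prod_cons, mul_inv_rev, adjSwap_inv]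
    simp only [mul_assoc, ← mul_assoc (w0 n) (w0 n), w0_mul_self, one_mul]

lemma permLen_w0_mul_mul_w0 (u : Equiv.Perm (Fin n)) : permLen (w0 n * u * w0 n) = permLen u := by
  have h₁ := permLen_mul_w0_add_permLen (w0 n * u)
  have h₂ := permLen_mul_w0_add_permLen u⁻¹
  rw [← permLen_inv (w0 n * u), mul_inv_rev, w0_inv] at h₁
  rw [permLen_inv] at h₂
  omega

lemma IsReducedWord.reflectWord {u : Equiv.Perm (Fin n)} {l : List ℕ} (hl : IsReducedWord n u l) :
    IsReducedWord n (w0 n * u⁻¹ * w0 n) (reflectWord n l) := by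
  obtain ⟨hrange, hprod, hlen⟩ := hl
  refine ⟨?_, ?_, ?_⟩
  · simp only [_root_.reflectWord, List.mem_reverse, List.mem_map]
    rintro _ ⟨j, hj, rfl⟩
    have := hrange j hj
    omega
  · rw [prod_map_adjSwap_reflectWord hrange, hprod]
  · rw [_root_.reflectWord, List.length_reverse, List.length_map, hlen, permLen_w0_mul_mul_w0,
      permLen_inv]

end ReflectWord

section DemazureXT

variable {n : ℕ}

noncomputable def demAtT (n : ℕ) (i : ℕ) :
    MvPolynomial (Fin n ⊕ Fin n) ℚ → MvPolynomial (Fin n ⊕ Fin n) ℚ :=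
  if h : i + 1 < n then
    demazure (Sum.inr ⟨i, Nat.lt_of_succ_lt h⟩) (Sum.inr ⟨i + 1, h⟩) else fun _ => 0

noncomputable def demWordT (n : ℕ) (l : List ℕ) :
    MvPolynomial (Fin n ⊕ Fin n) ℚ → MvPolynomial (Fin n ⊕ Fin n) ℚ :=
  l.foldr (fun i op => demAtT n i ∘ op) id

lemma demAtX_of_lt {i : ℕ} (h : i + 1 < n) :
    demAtX n i = demazure (Sum.inl ⟨i, Nat.lt_of_succ_lt h⟩) (Sum.inl ⟨i + 1, h⟩) :=
  dif_pos h

lemma demAtT_of_lt {i : ℕ} (h : i + 1 < n) :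
    demAtT n i = demazure (Sum.inr ⟨i, Nat.lt_of_succ_lt h⟩) (Sum.inr ⟨i + 1, h⟩) :=
  dif_pos h

lemma demAtX_comm {i j : ℕ} (hij : i + 2 ≤ j) (hj : j + 1 < n)
    (f : MvPolynomial (Fin n ⊕ Fin n) ℚ) :
    demAtX n i (demAtX n j f) = demAtX n j (demAtX n i f) := by
  rw [demAtX_of_lt hj, demAtX_of_lt (by omega : i + 1 < n)]
  exact demazure_demazure_comm (by simp) (by simp) (by simp; omega) (by simp; omega)
    (by simp; omega) (by simp; omega) f

lemma demAtX_braid {i : ℕ} (h : i + 2 < n) (f : MvPolynomial (Fin n ⊕ Fin n) ℚ) :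
    demAtX n i (demAtX n (i + 1) (demAtX n i f))
      = demAtX n (i + 1) (demAtX n i (demAtX n (i + 1) f)) := by
  rw [demAtX_of_lt h, demAtX_of_lt (by omega : i + 1 < n)]
  exact demazure_braid (by simp) (by simp) (by simp; omega) f

lemma demWordX_eq_prod (l : List ℕ) :
    demWordX n l
      = (l.map (β := Function.End (MvPolynomial (Fin n ⊕ Fin n) ℚ)) (demAtX n)).prod := by
  induction l with
  | nil => rfl
  | cons i l ih => exact congrArg (demAtX n i ∘ ·) ih

theorem demazureOfX_eq_demWordX {w : Equiv.Perm (Fin n)} {l : List ℕ}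
    (hl : IsReducedWord n w l) : demazureOfX n w = demWordX n l := by
  have hex : ∃ l, IsReducedWord n w l := ⟨l, hl⟩
  rw [demazureOfX, dif_pos hex, demWordX_eq_prod, demWordX_eq_prod]
  refine hex.choose_spec.prod_map_eq (M := Function.End _) (demAtX n) (fun i j hij hj => ?_)
    (fun i h => ?_) hl
  · exact funext (demAtX_comm hij hj)
  · exact funext (demAtX_braid h)

end DemazureXT

section Transfer

variable {n : ℕ}

lemma rename_sumComm_demWordX (l : List ℕ) (f : MvPolynomial (Fin n ⊕ Fin n) ℚ) :
    rename (Equiv.sumComm (Fin n) (Fin n)) (demWordX n l f)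
      = demWordT n l (rename (Equiv.sumComm (Fin n) (Fin n)) f) := by
  induction l with
  | nil => rfl
  | cons i l ih =>
    change rename _ (demAtX n i (demWordX n l f)) = demAtT n i (demWordT n l _)
    rw [← ih]
    by_cases h : i + 1 < n
    · rw [demAtX_of_lt h, demAtT_of_lt h, rename_demazure _ (by simp)]
      rfl
    · simp only [demAtX, demAtT, dif_neg h, map_zero]

lemma demAtT_smul (i : ℕ) (q : ℚ) (f : MvPolynomial (Fin n ⊕ Fin n) ℚ) :
    demAtT n i (q • f) = q • demAtT n i f := by
  by_cases h : i + 1 < n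
  · rw [demAtT_of_lt h, demazure_smul (by simp)]
  · simp only [demAtT, dif_neg h, smul_zero]

lemma demWordT_smul (l : List ℕ) (q : ℚ) (f : MvPolynomial (Fin n ⊕ Fin n) ℚ) :
    demWordT n l (q • f) = q • demWordT n l f := by
  induction l with
  | nil => rfl
  | cons i l ih => exact (congrArg (demAtT n i) ih).trans (demAtT_smul i q _)

lemma demWordT_append_singleton (l : List ℕ) (j : ℕ) (f : MvPolynomial (Fin n ⊕ Fin n) ℚ) :
    demWordT n (l ++ [j]) f = demWordT n l (demAtT n j f) := by
  induction l with
  | nil => rfl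
  | cons k l ih => exact congrArg (demAtT n k) ih

lemma demAtX_demWordT_comm {i : ℕ} (hi : i + 1 < n) {l : List ℕ} (hl : ∀ j ∈ l, j + 1 < n)
    (f : MvPolynomial (Fin n ⊕ Fin n) ℚ) :
    demAtX n i (demWordT n l f) = demWordT n l (demAtX n i f) := by
  induction l with
  | nil => rfl
  | cons j l ih =>
    change demAtX n i (demAtT n j (demWordT n l f)) = demAtT n j (demWordT n l (demAtX n i f))
    have hj : j + 1 < n := hl j List.mem_cons_self
    rw [← ih fun k hk => hl k (List.mem_cons_of_mem j hk), demAtX_of_lt hi, demAtT_of_lt hj]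
    exact demazure_demazure_comm (by simp) (by simp) (by simp) (by simp) (by simp) (by simp) _

lemma rename_sumCongr_prod_X_sub_X {α β R : Type*} [CommRing R] [DecidableEq α] [DecidableEq β]
    {s : Finset (α × β)} {e₁ : Equiv.Perm α} {e₂ : Equiv.Perm β} (he₁ : Function.Involutive e₁)
    (he₂ : Function.Involutive e₂) (hs : ∀ p ∈ s, (e₁ p.1, e₂ p.2) ∈ s) :
    rename (Equiv.Perm.sumCongr e₁ e₂)
        (∏ p ∈ s, (X (Sum.inl p.1) - X (Sum.inr p.2) : MvPolynomial (α ⊕ β) R))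
      = ∏ p ∈ s, (X (Sum.inl p.1) - X (Sum.inr p.2) : MvPolynomial (α ⊕ β) R) := by
  rw [map_prod]
  exact Finset.prod_nbij' (fun p => (e₁ p.1, e₂ p.2)) (fun p => (e₁ p.1, e₂ p.2)) hs hs
    (by simp [he₁ _, he₂ _]) (by simp [he₁ _, he₂ _]) (by simp)

lemma rename_sumComm_schubProd :
    rename (Equiv.sumComm (Fin n) (Fin n)) (schubProd n)
      = ((-1 : ℚ) ^ permLen (w0 n)) • schubProd n := by
  rw [permLen_w0, schubProd, map_prod, smul_eq_C_mul, map_pow, map_neg, map_one, ← Finset.prod_neg]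
  refine Finset.prod_nbij' Prod.swap Prod.swap ?_ ?_ (by simp) (by simp) ?_
  · simp +contextual [add_comm]
  · simp +contextual [add_comm]
  · intro p _
    simp

lemma demAtX_schubProd {i : ℕ} (h : i + 1 < n) :
    demAtX n i (schubProd n) = -demAtT n (n - 2 - i) (schubProd n) := by
  have hm : n - 2 - i + 1 < n := by omega
  set T := Finset.univ.filter (fun p : Fin n × Fin n => (p.1 : ℕ) + (p.2 : ℕ) + 2 ≤ n)
  set a : Fin n × Fin n := (⟨i, by omega⟩, ⟨n - 2 - i, by omega⟩)
  set S : MvPolynomial (Fin n ⊕ Fin n) ℚ := ∏ p ∈ T.erase a, (X (Sum.inl p.1) - X (Sum.inr p.2))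
  have hP : schubProd n = S * (X (Sum.inl a.1) - X (Sum.inr a.2)) :=
    (Finset.prod_erase_mul T _ (by simp [T, a]; omega)).symm
  -- rows `i, i + 1` of the staircase `T`, and its columns `n - 2 - i, n - 1 - i`, differ only
  -- in the box `a`
  have hSx : rename (Equiv.swap (Sum.inl a.1) (Sum.inl ⟨i + 1, h⟩)) S = S := by
    rw [← Equiv.Perm.sumCongr_swap_refl, ← adjSwap_of_lt h]
    refine rename_sumCongr_prod_X_sub_X (adjSwap_involutive i) (fun _ => rfl) ?_
    simp only [T, a, Finset.mem_erase, Finset.mem_filter, Finset.mem_univ, true_and, ne_eq,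
      Prod.ext_iff, Fin.ext_iff, val_adjSwap h, Equiv.refl_apply]
    intro p
    split_ifs <;> omega
  have hSt : rename (Equiv.swap (Sum.inr a.2) (Sum.inr ⟨n - 2 - i + 1, hm⟩)) S = S := by
    rw [← Equiv.Perm.sumCongr_refl_swap, ← adjSwap_of_lt hm]
    refine rename_sumCongr_prod_X_sub_X (fun _ => rfl) (adjSwap_involutive _) ?_
    simp only [T, a, Finset.mem_erase, Finset.mem_filter, Finset.mem_univ, true_and, ne_eq,
      Prod.ext_iff, Fin.ext_iff, val_adjSwap hm, Equiv.refl_apply]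
    intro p
    split_ifs <;> omega
  have hx : (Sum.inl a.1 : Fin n ⊕ Fin n) ≠ Sum.inl ⟨i + 1, h⟩ := by simp [a]
  have ht : (Sum.inr a.2 : Fin n ⊕ Fin n) ≠ Sum.inr ⟨n - 2 - i + 1, hm⟩ := by simp [a]
  rw [demAtX_of_lt h, demAtT_of_lt hm, hP, demazure_mul_of_rename_swap_eq hx hSx,
    demazure_mul_of_rename_swap_eq ht hSt, demazure_sub hx, demazure_sub ht, demazure_X_left hx,
    demazure_X_left ht, demazure_X_of_ne hx (by simp) (by simp),
    demazure_X_of_ne ht (by simp) (by simp)]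
  ring

lemma demWordX_schubProd {l : List ℕ} (hl : ∀ j ∈ l, j + 1 < n) :
    demWordX n l (schubProd n)
      = ((-1 : ℚ) ^ l.length) • demWordT n (reflectWord n l) (schubProd n) := by
  induction l with
  | nil => simp [demWordX, demWordT, reflectWord]
  | cons i l ih =>
    have hi : i + 1 < n := hl i List.mem_cons_self
    have hl' : ∀ j ∈ l, j + 1 < n := fun j hj => hl j (List.mem_cons_of_mem i hj)
    have hrefl : ∀ j ∈ reflectWord n l, j + 1 < n := by
      simp only [reflectWord, List.mem_reverse, List.mem_map]
      rintro _ ⟨j, hj, rfl⟩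
      have := hl' j hj
      omega
    change demAtX n i (demWordX n l (schubProd n)) = _
    rw [ih hl', demAtX_of_lt hi, demazure_smul (by simp), ← demAtX_of_lt hi,
      demAtX_demWordT_comm hi hrefl, demAtX_schubProd hi,
      ← neg_one_smul ℚ (demAtT n (n - 2 - i) (schubProd n)), demWordT_smul,
      smul_smul, reflectWord_cons, demWordT_append_singleton, List.length_cons, pow_succ]

end Transfer

theorem schubert_eq_neg_one_pow_smul_rename_schubert_inv (n : ℕ) (w : Equiv.Perm (Fin n)) :
    schubert n w
      = ((-1 : ℚ) ^ permLen w) • rename (Equiv.sumComm (Fin n) (Fin n)) (schubert n w⁻¹) := by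
  obtain ⟨u, hu⟩ := exists_isReducedWord (w⁻¹ * w0 n)
  have hv : IsReducedWord n (w⁻¹⁻¹ * w0 n) (reflectWord n u) := by
    simpa only [mul_inv_rev, w0_inv, inv_inv, ← mul_assoc, w0_mul_self, one_mul]
      using hu.reflectWord
  have hlen : u.length + permLen w = permLen (w0 n) := by
    rw [hu.2.2, ← permLen_inv w]
    exact permLen_mul_w0_add_permLen w⁻¹
  have hsign : (-1 : ℚ) ^ u.length = (-1) ^ permLen w * (-1) ^ permLen (w0 n) := by
    rw [← hlen, pow_add, mul_left_comm, ← pow_add, Even.neg_one_pow ⟨_, rfl⟩, mul_one]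
  rw [schubert, schubert, demazureOfX_eq_demWordX hu, demazureOfX_eq_demWordX hv,
    demWordX_schubProd hu.1, rename_sumComm_demWordX, rename_sumComm_schubProd, demWordT_smul,
    smul_smul, hsign]

theorem schubert_antipode_general (n : ℕ) (w : Equiv.Perm (Fin n)) :
    schubert n w -
        ((-1 : ℚ) ^ permLen w) • rename (Equiv.sumComm (Fin n) (Fin n)) (schubert n w⁻¹) ∈
      Ideal.span {q : MvPolynomial (Fin n ⊕ Fin n) ℚ |
        ∃ p : MvPolynomial (Fin n) ℚ, p.IsSymmetric ∧
          q = rename Sum.inl p - rename Sum.inr p} := by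
  rw [← schubert_eq_neg_one_pow_smul_rename_schubert_inv, sub_self]
  exact Ideal.zero_mem _

/-- **Antipode identity.**  `𝔖_w(x,t) - (-1)^{ℓ(w)} 𝔖_{w⁻¹}(t,x)` lies in the ideal
generated by the differences `p(x) - p(t)` for symmetric polynomials `p`. -/
theorem schubert_antipode (n : ℕ) (hn : 1 ≤ n) (w : Equiv.Perm (Fin n)) :
    schubert n w -
        ((-1 : ℚ) ^ permLen w) • rename (Equiv.sumComm (Fin n) (Fin n)) (schubert n w⁻¹) ∈
      Ideal.span {q : MvPolynomial (Fin n ⊕ Fin n) ℚ |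
        ∃ p : MvPolynomial (Fin n) ℚ, p.IsSymmetric ∧
          q = rename Sum.inl p - rename Sum.inr p} :=
  schubert_antipode_general n w
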